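/- arXiv:2509.22357 — 3 statements merged into one kernel-verified Lean document; each statement's English description precedes it below -/
import Mathlib

section
/- Let C and K be finite sets (customers and second-echelon vehicles) and fix a satellite h. Let D : C → ℝ with D c ≥ 0, Q : K → ℝ with Q k ≥ 0, y : C → ℝ with y c ∈ {0,1} (home-delivery assignment of customer c to satellite h), q : K → ℝ with q k ∈ {0,1} (assignment of vehicle k to satellite h), x : K → C → ℝ with x k c ∈ {0,1} (vehicle k traverses arc (h,c)), and z : K → C → ℝ with z k c ≥ 0 (load of vehicle k on arc (h,c)). Assume: (i) ∑_{k ∈ K} ∑_{c ∈ C} z k c = ∑_{c ∈ C} D c · y c (the total load departing satellite h equals the home-delivery demand assigned to h); (ii) z k c ≤ Q k · x k c for all k, c (arc capacity); (iii) ∑_{c ∈ C} x k c ≤ q k for all k (a vehicle leaves satellite h toward customers only if it is assigned to h). Then ∑_{c ∈ C} D c · y c ≤ ∑_{k ∈ K} Q k · q k; that is, the capacity of the vehicles assigned to a satellite covers the home-delivery demand assigned to that satellite (validity of the second valid inequality of the 2E-LRP-ECB model). -/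
/-- Second valid inequality of the 2E-LRP-ECB model: for a fixed satellite `h`,
the capacity of the second-echelon vehicles assigned to `h` covers the
home-delivery demand assigned to `h`. -/
theorem valid_inequality_two
    {C K : Type*} [Fintype C] [Fintype K]
    (D : C → ℝ) (hD : ∀ c, 0 ≤ D c)
    (Q : K → ℝ) (hQ : ∀ k, 0 ≤ Q k)
    (y : C → ℝ) (hy : ∀ c, y c = 0 ∨ y c = 1)
    (q : K → ℝ) (hq : ∀ k, q k = 0 ∨ q k = 1)
    (x : K → C → ℝ) (hx : ∀ k c, x k c = 0 ∨ x k c = 1)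
    (z : K → C → ℝ) (hz : ∀ k c, 0 ≤ z k c)
    (hload : ∑ k, ∑ c, z k c = ∑ c, D c * y c)
    (harc : ∀ k c, z k c ≤ Q k * x k c)
    (hdepart : ∀ k, ∑ c, x k c ≤ q k) :
    ∑ c, D c * y c ≤ ∑ k, Q k * q k := by
  rw [← hload]
  apply Finset.sum_le_sum
  intro k _
  calc ∑ c, z k c ≤ ∑ c, Q k * x k c := Finset.sum_le_sum fun c _ => harc k c
    _ = Q k * ∑ c, x k c := by rw [Finset.mul_sum]
    _ ≤ Q k * q k := mul_le_mul_of_nonneg_left (hdepart k) (hQ k)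
end

section
/- Let C and K be finite sets, H a finite set of satellites, C₀ ⊆ C a subset of customers, D : C → ℝ with D c ≥ 0, Q : K → ℝ with Q k ≥ 0, and for each h ∈ H let y(·,h) : C → {0,1}, q(·,h) : K → {0,1}, x(·,·,h) : K → C → {0,1}, z(·,·,h) : K → C → ℝ≥0 satisfy, for every h: (i) ∑_{k} ∑_{c} z k c h = ∑_{c} D c · y c h; (ii) z k c h ≤ Q k · x k c h; (iii) ∑_{c} x k c h ≤ q k h. Then ∑_{k ∈ K} ∑_{h ∈ H} Q k · q k h ≥ ∑_{c ∈ C₀} ∑_{h ∈ H} D c · y c h; that is, the total capacity of vehicles assigned to satellites covers the home-delivery demand of the customers in C₀ (validity of the third valid inequality of the 2E-LRP-ECB model, where C₀ is the set of customers unable to pick up their orders). -/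
/-- Third valid inequality of the 2E-LRP-ECB model: the total capacity of the
second-echelon vehicles assigned to satellites covers the home-delivery demand
of the customers in `C₀` (those unable to pick up their orders). -/
theorem valid_inequality_three
    {C K H : Type*} [Fintype C] [Fintype K] [Fintype H]
    (C₀ : Finset C)
    (D : C → ℝ) (hD : ∀ c, 0 ≤ D c)
    (Q : K → ℝ) (hQ : ∀ k, 0 ≤ Q k)
    (y : C → H → ℝ) (hy : ∀ c h, y c h = 0 ∨ y c h = 1)
    (q : K → H → ℝ) (hq : ∀ k h, q k h = 0 ∨ q k h = 1)
    (x : K → C → H → ℝ) (hx : ∀ k c h, x k c h = 0 ∨ x k c h = 1)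
    (z : K → C → H → ℝ) (hz : ∀ k c h, 0 ≤ z k c h)
    (hload : ∀ h, ∑ k, ∑ c, z k c h = ∑ c, D c * y c h)
    (harc : ∀ k c h, z k c h ≤ Q k * x k c h)
    (hdepart : ∀ k h, ∑ c, x k c h ≤ q k h) :
    ∑ k, ∑ h, Q k * q k h ≥ ∑ c ∈ C₀, ∑ h, D c * y c h := by
  rw [ge_iff_le, Finset.sum_comm]
  rw [Finset.sum_comm (s := Finset.univ) (t := Finset.univ)]
  apply Finset.sum_le_sum
  intro h _
  calc ∑ c ∈ C₀, D c * y c h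
      ≤ ∑ c, D c * y c h := by
        apply Finset.sum_le_sum_of_subset_of_nonneg (Finset.subset_univ _)
        intro c _ _
        rcases hy c h with h1 | h1 <;> simp [h1, hD c]
    _ = ∑ k, ∑ c, z k c h := (hload h).symm
    _ ≤ ∑ k, Q k * q k h := by
        apply Finset.sum_le_sum
        intro k _
        calc ∑ c, z k c h
            ≤ ∑ c, Q k * x k c h := Finset.sum_le_sum fun c _ => harc k c h
          _ = Q k * ∑ c, x k c h := by rw [Finset.mul_sum]
          _ ≤ Q k * q k h := mul_le_mul_of_nonneg_left (hdepart k h) (hQ k)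
end

section
/- Let C, H be finite sets, fix a second-echelon vehicle k with capacity Q ≥ 0, and let D : C → ℝ with D c ≥ 0, s : C → {0,1} (s c = 1 if customer c is assigned to vehicle k), q : H → {0,1} (q h = 1 if vehicle k is assigned to satellite h), x a {0,1}-valued function on arcs between nodes of H ∪ C, and z a nonnegative function on the same arcs. Assume: (i) for every customer c, (∑_{(i,c)} z(i,c)) − (∑_{(c,i)} z(c,i)) = D c · s c (load conservation at customers); (ii) z(c,h) = 0 for every c ∈ C, h ∈ H (the vehicle carries no load on arcs from customers to satellites); (iii) z(i,j) ≤ Q · x(i,j) on every arc; (iv) for every satellite h, ∑_{(j,h)} x(j,h) ≤ q h and the number of arcs of the vehicle leaving h equals the number entering h; (v) ∑_{h ∈ H} q h ≤ 1 (the vehicle is assigned to at most one satellite). Then ∑_{c ∈ C} D c · s c ≤ Q; that is, in any feasible solution of the 2E-LRP-ECB the total demand served by each second-echelon vehicle does not exceed its capacity. -/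
/-- In any feasible solution of the 2E-LRP-ECB, the total demand served by a
second-echelon vehicle does not exceed its capacity.  The node set of the
second echelon is `H ⊕ C` (satellites and customers), and `x`, `z` are the
routing and load variables of the fixed vehicle on the arcs between these
nodes. -/
theorem second_echelon_vehicle_capacity
    {C H : Type*} [Fintype C] [Fintype H]
    (Q : ℝ) (hQ : 0 ≤ Q)
    (D : C → ℝ) (hD : ∀ c, 0 ≤ D c)
    (s : C → ℝ) (hs : ∀ c, s c = 0 ∨ s c = 1)
    (q : H → ℝ) (hq : ∀ h, q h = 0 ∨ q h = 1)
    (x : (H ⊕ C) → (H ⊕ C) → ℝ) (hx : ∀ i j, x i j = 0 ∨ x i j = 1)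
    (z : (H ⊕ C) → (H ⊕ C) → ℝ) (hz : ∀ i j, 0 ≤ z i j)
    (hcons : ∀ c : C,
      (∑ i, z i (Sum.inr c)) - (∑ i, z (Sum.inr c) i) = D c * s c)
    (hret : ∀ (c : C) (h : H), z (Sum.inr c) (Sum.inl h) = 0)
    (harc : ∀ i j, z i j ≤ Q * x i j)
    (henter : ∀ h : H, ∑ j, x j (Sum.inl h) ≤ q h)
    (hflow : ∀ h : H, ∑ j, x (Sum.inl h) j = ∑ j, x j (Sum.inl h))
    (hone : ∑ h, q h ≤ 1) :
    ∑ c, D c * s c ≤ Q := by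
  have hxnn : ∀ i j, 0 ≤ x i j := by
    intro i j; rcases hx i j with h | h <;> rw [h] <;> norm_num
  -- Step 1: total demand equals total load on satellite→customer arcs
  have key : ∑ c, D c * s c = ∑ h, ∑ c, z (Sum.inl h) (Sum.inr c) := by
    rw [show ∑ c, D c * s c = ∑ c, ((∑ i, z i (Sum.inr c)) - (∑ i, z (Sum.inr c) i)) from
      (Finset.sum_congr rfl (fun c _ => (hcons c).symm))]
    rw [Finset.sum_sub_distrib]
    simp only [Fintype.sum_sum_type]
    have h1 : ∀ c : C, (∑ h : H, z (Sum.inr c) (Sum.inl h)) = 0 := by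
      intro c; simp [hret]
    rw [Finset.sum_add_distrib, Finset.sum_add_distrib]
    have e1 : ∑ c : C, ∑ h : H, z (Sum.inl h) (Sum.inr c)
        = ∑ h : H, ∑ c : C, z (Sum.inl h) (Sum.inr c) := Finset.sum_comm
    have e2 : ∑ c : C, ∑ c' : C, z (Sum.inr c') (Sum.inr c)
        = ∑ c : C, ∑ c' : C, z (Sum.inr c) (Sum.inr c') := Finset.sum_comm
    have e3 : ∑ c : C, ∑ h : H, z (Sum.inr c) (Sum.inl h) = 0 := by simp [h1]
    rw [e1, e2, e3]
    ring
  rw [key]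
  -- Step 2: bound each satellite's outgoing load by Q * q h
  have step : ∀ h : H, ∑ c, z (Sum.inl h) (Sum.inr c) ≤ Q * q h := by
    intro h
    calc ∑ c, z (Sum.inl h) (Sum.inr c)
        ≤ ∑ c, Q * x (Sum.inl h) (Sum.inr c) :=
          Finset.sum_le_sum (fun c _ => harc _ _)
      _ = Q * ∑ c, x (Sum.inl h) (Sum.inr c) := by rw [Finset.mul_sum]
      _ ≤ Q * ∑ j, x (Sum.inl h) j := by
          apply mul_le_mul_of_nonneg_left _ hQ
          rw [Fintype.sum_sum_type]
          have : 0 ≤ ∑ h' : H, x (Sum.inl h) (Sum.inl h') :=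
            Finset.sum_nonneg (fun _ _ => hxnn _ _)
          linarith
      _ = Q * ∑ j, x j (Sum.inl h) := by rw [hflow h]
      _ ≤ Q * q h := mul_le_mul_of_nonneg_left (henter h) hQ
  calc ∑ h, ∑ c, z (Sum.inl h) (Sum.inr c) ≤ ∑ h, Q * q h :=
        Finset.sum_le_sum (fun h _ => step h)
    _ = Q * ∑ h, q h := by rw [Finset.mul_sum]
    _ ≤ Q * 1 := mul_le_mul_of_nonneg_left hone hQ
    _ = Q := mul_one Q
end
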